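/- arXiv:1004.2398 — 2 statements merged into one kernel-verified Lean document; each statement's English description precedes it below -/
import Mathlib

section
/- Let d ≥ 1 and let D ⊆ ℝ^d be a nonempty bounded convex open set. Then there exists a sequence (F_n)_{n≥1} of finite subsets of ℝ^d such that, setting D_n equal to the interior of the convex hull of F_n (an open convex polytope), the sequence (D_n) is increasing with the closure of D_n contained in D_{n+1} for every n, and ⋃_{n≥1} D_n = D. -/
/-!
An open set `U` of a finite-dimensional space is a countable union of compact sets `K n`. A compact
subset of `U` is covered by the interiors of finitely many simplices with vertices in `U`, so it
lies in the interior of a polytope with vertices in `U`. Choosing the polytopes recursively, each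
one containing in its interior the previous (closed) polytope together with `K n`, gives the
exhaustion; when `U` is convex every such polytope stays inside `U`.
-/

open Set Topology

theorem IsOpen.isSigmaCompact {X : Type*} [TopologicalSpace X] [LocallyCompactSpace X]
    [SecondCountableTopology X] {U : Set X} (hU : IsOpen U) : IsSigmaCompact U :=
  have := hU.locallyCompactSpace
  isSigmaCompact_iff_sigmaCompactSpace.mpr inferInstance

section Polytope

variable {E : Type*} [NormedAddCommGroup E] [NormedSpace ℝ E] [FiniteDimensional ℝ E]
  {U K : Set E}

theorem IsCompact.exists_finset_subset_interior_convexHull (hK : IsCompact K)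
    (hU : U ∈ 𝓝ˢ K) :
    ∃ F : Finset E, ↑F ⊆ U ∧ K ⊆ interior (convexHull ℝ (F : Set E)) := by
  classical
  refine hK.induction_on
    (p := fun S => ∃ F : Finset E, ↑F ⊆ U ∧ S ⊆ interior (convexHull ℝ ↑F))
    ⟨∅, by simp, empty_subset _⟩ ?_ ?_ ?_
  · rintro S T hST ⟨F, hFU, hTF⟩
    exact ⟨F, hFU, hST.trans hTF⟩
  · rintro S T ⟨F, hFU, hSF⟩ ⟨G, hGU, hTG⟩
    refine ⟨F ∪ G, by simpa using ⟨hFU, hGU⟩, union_subset ?_ ?_⟩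
    · exact hSF.trans (interior_mono (convexHull_mono (by simp)))
    · exact hTG.trans (interior_mono (convexHull_mono (by simp)))
  · intro x hx
    obtain ⟨b, hxb, hbU⟩ :=
      exists_mem_interior_convexHull_affineBasis (mem_nhdsSet_iff_forall.mp hU x hx)
    refine ⟨_, mem_nhdsWithin_of_mem_nhds (isOpen_interior.mem_nhds hxb),
      (range b).toFinset, ?_, ?_⟩
    · simpa using (subset_convexHull ℝ _).trans hbU
    · simp

theorem Convex.exists_finset_seq_convexHull_subset_interior_iUnion_eq (hUc : Convex ℝ U)
    (hUo : IsOpen U) :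
    ∃ F : ℕ → Finset E,
      (∀ n, convexHull ℝ (F n : Set E) ⊆ interior (convexHull ℝ (F (n + 1) : Set E))) ∧
      ⋃ n, interior (convexHull ℝ (F n : Set E)) = U := by
  obtain ⟨K, hK, hKU⟩ := hUo.isSigmaCompact
  have hnext : ∀ n (G : Finset E), ↑G ⊆ U → ∃ G' : Finset E, ↑G' ⊆ U ∧
      convexHull ℝ (G : Set E) ∪ K n ⊆ interior (convexHull ℝ (G' : Set E)) := fun n G hG =>
    ((G.finite_toSet.isCompact_convexHull ℝ).union
      (hK n)).exists_finset_subset_interior_convexHull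
      (hUo.mem_nhdsSet.mpr (union_subset (convexHull_min hG hUc) (hKU ▸ subset_iUnion K n)))
  choose! next hnext_U hnext_sub using hnext
  obtain ⟨F, hF_zero, hF_succ⟩ :
      ∃ F : ℕ → Finset E, F 0 = ∅ ∧ ∀ n, F (n + 1) = next n (F n) :=
    ⟨fun n => Nat.rec ∅ next n, rfl, fun _ => rfl⟩
  have hFU (n : ℕ) : (F n : Set E) ⊆ U := by
    induction n with
    | zero => simp [hF_zero]
    | succ n ih => exact hF_succ n ▸ hnext_U n (F n) ih
  have hstep (n : ℕ) : convexHull ℝ (F n : Set E) ∪ K n ⊆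
      interior (convexHull ℝ (F (n + 1) : Set E)) :=
    hF_succ n ▸ hnext_sub n (F n) (hFU n)
  refine ⟨F, fun n => subset_union_left.trans (hstep n), ?_⟩
  refine (iUnion_subset fun n => interior_subset.trans (convexHull_min (hFU n) hUc)).antisymm ?_
  rw [← hKU]
  exact iUnion_mono' fun n => ⟨n + 1, subset_union_right.trans (hstep n)⟩

end Polytope

theorem exhaustion_by_convex_polytopes_general (d : ℕ)
    (D : Set (EuclideanSpace ℝ (Fin d))) (hconv : Convex ℝ D) (hopen : IsOpen D) :
    ∃ F : ℕ → Finset (EuclideanSpace ℝ (Fin d)),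
      (∀ n, interior (convexHull ℝ (↑(F n) : Set (EuclideanSpace ℝ (Fin d)))) ⊆
        interior (convexHull ℝ (↑(F (n + 1)) : Set (EuclideanSpace ℝ (Fin d))))) ∧
      (∀ n, closure (interior (convexHull ℝ (↑(F n) : Set (EuclideanSpace ℝ (Fin d))))) ⊆
        interior (convexHull ℝ (↑(F (n + 1)) : Set (EuclideanSpace ℝ (Fin d))))) ∧
      (⋃ n, interior (convexHull ℝ (↑(F n) : Set (EuclideanSpace ℝ (Fin d))))) = D := by
  obtain ⟨F, hstep, hunion⟩ :=
    hconv.exists_finset_seq_convexHull_subset_interior_iUnion_eq hopen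
  have hclosure (n : ℕ) :
      closure (interior (convexHull ℝ (F n : Set (EuclideanSpace ℝ (Fin d))))) ⊆
        interior (convexHull ℝ (F (n + 1) : Set (EuclideanSpace ℝ (Fin d)))) :=
    (closure_minimal interior_subset ((F n).finite_toSet.isClosed_convexHull ℝ)).trans (hstep n)
  exact ⟨F, fun n => subset_closure.trans (hclosure n), hclosure, hunion⟩

/-- Any nonempty bounded convex open set `D ⊆ ℝ^d` can be exhausted by an increasing
sequence of open convex polytopes: there are finite sets `F n` such that, with
`D_n = interior (convexHull (F n))`, we have `D_n ⊆ D_{n+1}`,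
`closure D_n ⊆ D_{n+1}` for all `n`, and `⋃ n, D_n = D`. -/
theorem exhaustion_by_convex_polytopes (d : ℕ) (hd : 1 ≤ d)
    (D : Set (EuclideanSpace ℝ (Fin d))) (hne : D.Nonempty)
    (hbdd : Bornology.IsBounded D) (hconv : Convex ℝ D) (hopen : IsOpen D) :
    ∃ F : ℕ → Finset (EuclideanSpace ℝ (Fin d)),
      (∀ n, interior (convexHull ℝ (↑(F n) : Set (EuclideanSpace ℝ (Fin d)))) ⊆
        interior (convexHull ℝ (↑(F (n + 1)) : Set (EuclideanSpace ℝ (Fin d))))) ∧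
      (∀ n, closure (interior (convexHull ℝ (↑(F n) : Set (EuclideanSpace ℝ (Fin d))))) ⊆
        interior (convexHull ℝ (↑(F (n + 1)) : Set (EuclideanSpace ℝ (Fin d))))) ∧
      (⋃ n, interior (convexHull ℝ (↑(F n) : Set (EuclideanSpace ℝ (Fin d))))) = D :=
  exhaustion_by_convex_polytopes_general d D hconv hopen
end

section
/- Let D ⊆ ℝ^d be a nonempty bounded convex open set and let (D_n)_{n≥1} be an increasing sequence of nonempty convex open subsets of D with ⋃_{n≥1} D_n = D. Then the Hausdorff distance between the closure of D_n and the closure of D tends to 0 as n → ∞; in particular, sup over pairs m, n ≥ N of the Hausdorff distance between closure(D_n) and closure(D_m) tends to 0 as N → ∞. -/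
/-!
Fix `x ∈ D` and `0 < t ≤ 1`. Since `D` is convex and open, the homothety of ratio `1 - t`
about `x` maps `closure D` into `D`, and its image is compact because `closure D` is. An
increasing open cover of that compact set swallows it at some finite stage, so from then on
every point `y` of `closure D` lies within `dist (homothety x (1 - t) y) y ≤ t * diam D` of
`closure (D_n)`. The statement about pairs `m, n` follows by the triangle inequality.
-/

open Filter Topology Metric Set AffineMap

theorem Convex.image_homothety_closure_subset_interior {E : Type*} [AddCommGroup E]
    [Module ℝ E] [TopologicalSpace E] [IsTopologicalAddGroup E] [ContinuousConstSMul ℝ E]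
    {s : Set E} (hs : Convex ℝ s) {x : E} (hx : x ∈ interior s) {c : ℝ} (hc₀ : 0 ≤ c)
    (hc₁ : c < 1) : homothety x c '' closure s ⊆ interior s := by
  rintro _ ⟨y, hy, rfl⟩
  rw [homothety_eq_lineMap, lineMap_apply_module]
  exact hs.combo_interior_closure_mem_interior hx hy (sub_pos.2 hc₁) hc₀ (sub_add_cancel 1 c)

theorem IsCompact.eventually_subset_of_monotone {X ι : Type*} [TopologicalSpace X]
    [SemilatticeSup ι] [Nonempty ι] {K : Set X} (hK : IsCompact K) {U : ι → Set X}
    (hUo : ∀ i, IsOpen (U i)) (hU : Monotone U) (hKU : K ⊆ ⋃ i, U i) :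
    ∀ᶠ i in atTop, K ⊆ U i := by
  obtain ⟨i, hi⟩ := hK.elim_directed_cover U hUo hKU hU.directed_le
  filter_upwards [eventually_ge_atTop i] with j hj using hi.trans (hU hj)

theorem exists_hausdorffDist_lt_of_tendsto {α ι : Type*} [PseudoMetricSpace α]
    [SemilatticeSup ι] [Nonempty ι] {A : ι → Set α} {B : Set α}
    (hfin : ∀ i, hausdorffEDist (A i) B ≠ ⊤)
    (hlim : Tendsto (fun i => hausdorffDist (A i) B) atTop (𝓝 0)) {ε : ℝ} (hε : 0 < ε) :
    ∃ N, ∀ m n, N ≤ m → N ≤ n → hausdorffDist (A m) (A n) < ε := by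
  obtain ⟨N, hN⟩ := eventually_atTop.1 ((tendsto_order.1 hlim).2 (ε / 2) (half_pos hε))
  refine ⟨N, fun m n hm hn => ?_⟩
  calc hausdorffDist (A m) (A n) ≤ hausdorffDist (A m) B + hausdorffDist B (A n) :=
        hausdorffDist_triangle (hfin m)
    _ = hausdorffDist (A m) B + hausdorffDist (A n) B := by rw [hausdorffDist_comm (s := B)]
    _ < ε / 2 + ε / 2 := add_lt_add (hN m hm) (hN n hn)
    _ = ε := add_halves ε

section Exhaustion

variable {E ι : Type*} [NormedAddCommGroup E] [NormedSpace ℝ E] [ProperSpace E]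
  [SemilatticeSup ι] [Nonempty ι] {D : Set E} {U : ι → Set E}

theorem eventually_hausdorffDist_closure_le (hbdd : Bornology.IsBounded D)
    (hconv : Convex ℝ D) (hopen : IsOpen D) {x : E} (hx : x ∈ D) (hUo : ∀ i, IsOpen (U i))
    (hU : Monotone U) (hunion : ⋃ i, U i = D) {t : ℝ} (ht₀ : 0 < t) (ht₁ : t ≤ 1) :
    ∀ᶠ i in atTop, hausdorffDist (closure (U i)) (closure D) ≤ t * diam D := by
  set K := homothety x (1 - t) '' closure D
  have hK : IsCompact K := hbdd.isCompact_closure.image (homothety_continuous x (1 - t))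
  have hKD : K ⊆ D := by
    simpa only [hopen.interior_eq] using hconv.image_homothety_closure_subset_interior
      (hopen.interior_eq.symm ▸ hx) (sub_nonneg.2 ht₁) (sub_lt_self 1 ht₀)
  filter_upwards [hK.eventually_subset_of_monotone hUo hU (hunion ▸ hKD)] with i hi
  refine hausdorffDist_le_of_mem_dist (by positivity) (fun y hy => ?_) (fun y hy => ?_)
  · refine ⟨y, closure_mono (hunion ▸ subset_iUnion U i) hy, ?_⟩
    rw [dist_self]
    positivity
  · refine ⟨homothety x (1 - t) y, subset_closure (hi ⟨y, hy, rfl⟩), ?_⟩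
    rw [dist_comm, dist_homothety_self, sub_sub_cancel, Real.norm_of_nonneg ht₀.le,
      ← diam_closure]
    exact mul_le_mul_of_nonneg_left (dist_le_diam_of_mem hbdd.closure (subset_closure hx) hy)
      ht₀.le

theorem tendsto_hausdorffDist_closure_of_iUnion_eq (hne : D.Nonempty)
    (hbdd : Bornology.IsBounded D) (hconv : Convex ℝ D) (hopen : IsOpen D)
    (hUo : ∀ i, IsOpen (U i)) (hU : Monotone U) (hunion : ⋃ i, U i = D) :
    Tendsto (fun i => hausdorffDist (closure (U i)) (closure D)) atTop (𝓝 0) := by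
  refine tendsto_order.2 ⟨fun a ha => Eventually.of_forall fun i =>
    ha.trans_le hausdorffDist_nonneg, fun ε hε => ?_⟩
  obtain ⟨t, ht₀, ht⟩ := exists_pos_mul_lt hε (diam D)
  filter_upwards [eventually_hausdorffDist_closure_le hbdd hconv hopen hne.some_mem hUo hU
    hunion (lt_min ht₀ one_pos) (min_le_right t 1)] with i hi
  calc hausdorffDist (closure (U i)) (closure D) ≤ min t 1 * diam D := hi
    _ ≤ t * diam D := mul_le_mul_of_nonneg_right (min_le_left t 1) diam_nonneg
    _ = diam D * t := mul_comm _ _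
    _ < ε := ht

end Exhaustion

theorem hausdorffDist_exhaustion_tendsto_zero_general (d : ℕ)
    (D : Set (EuclideanSpace ℝ (Fin d))) (hne : D.Nonempty)
    (hbdd : Bornology.IsBounded D) (hconv : Convex ℝ D) (hopen : IsOpen D)
    (Dn : ℕ → Set (EuclideanSpace ℝ (Fin d)))
    (hDne : ∀ n, (Dn n).Nonempty)
    (hDopen : ∀ n, IsOpen (Dn n))
    (hmono : Monotone Dn) (hunion : (⋃ n, Dn n) = D) :
    Tendsto (fun n => Metric.hausdorffDist (closure (Dn n)) (closure D))
      atTop (nhds 0) ∧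
    ∀ ε : ℝ, 0 < ε → ∃ N : ℕ, ∀ m n : ℕ, N ≤ m → N ≤ n →
      Metric.hausdorffDist (closure (Dn m)) (closure (Dn n)) < ε := by
  have hlim := tendsto_hausdorffDist_closure_of_iUnion_eq hne hbdd hconv hopen hDopen hmono hunion
  have hfin (n : ℕ) : hausdorffEDist (closure (Dn n)) (closure D) ≠ ⊤ :=
    hausdorffEDist_ne_top_of_nonempty_of_bounded (hDne n).closure hne.closure
      (hbdd.subset (hunion ▸ subset_iUnion Dn n)).closure hbdd.closure
  exact ⟨hlim, fun ε hε => exists_hausdorffDist_lt_of_tendsto hfin hlim hε⟩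

/-- If `D ⊆ ℝ^d` is nonempty, bounded, convex and open, and `(D_n)` is an increasing
sequence of nonempty convex open subsets of `D` with `⋃ n, D_n = D`, then the
Hausdorff distance between `closure (D_n)` and `closure D` tends to `0`; in
particular the Hausdorff distances between `closure (D_n)` and `closure (D_m)` for
`m, n ≥ N` tend to `0` uniformly as `N → ∞`. -/
theorem hausdorffDist_exhaustion_tendsto_zero (d : ℕ)
    (D : Set (EuclideanSpace ℝ (Fin d))) (hne : D.Nonempty)
    (hbdd : Bornology.IsBounded D) (hconv : Convex ℝ D) (hopen : IsOpen D)
    (Dn : ℕ → Set (EuclideanSpace ℝ (Fin d)))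
    (hDne : ∀ n, (Dn n).Nonempty) (hDconv : ∀ n, Convex ℝ (Dn n))
    (hDopen : ∀ n, IsOpen (Dn n)) (hDsub : ∀ n, Dn n ⊆ D)
    (hmono : Monotone Dn) (hunion : (⋃ n, Dn n) = D) :
    Tendsto (fun n => Metric.hausdorffDist (closure (Dn n)) (closure D))
      atTop (nhds 0) ∧
    ∀ ε : ℝ, 0 < ε → ∃ N : ℕ, ∀ m n : ℕ, N ≤ m → N ≤ n →
      Metric.hausdorffDist (closure (Dn m)) (closure (Dn n)) < ε :=
  hausdorffDist_exhaustion_tendsto_zero_general d D hne hbdd hconv hopen Dn hDne hDopen hmono hunion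
end
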